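/- In the non-completeness counterexample, the tuple ⟨Q, D_2, S, S′⟩ is co-intersectable: there exists a skeleton σ and b ∈ σ(E_1) and i_y ∈ Q|_b such that D_2|_{i_y} ∩ S|_b ∩ S′|_b ≠ ∅. -/

import Mathlib

/-- Kinds of item classes in a relational schema. -/
inductive ItemKind | entity | relationship
deriving DecidableEq

/-- Cardinalities. -/
inductive Card | one | many
deriving DecidableEq

/-- A relational schema: item classes with kinds, participation of entity
classes in relationship classes, and a cardinality function `card R E`. -/
structure Schema where
  Class : Type
  kind : Class → ItemKind
  participates : Class → Class → Prop   -- `participates E R`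
  card : Class → Class → Card           -- `card R E`

namespace Schema

/-- Condition (1) of relational paths: alternation between entity and
relationship classes, with participation at each consecutive pair. -/
def Alternates (S : Schema) (P : List S.Class) : Prop :=
  ∀ i a b, P[i]? = some a → P[i+1]? = some b →
    ((S.kind a = .entity ∧ S.kind b = .relationship ∧ S.participates a b) ∨
     (S.kind a = .relationship ∧ S.kind b = .entity ∧ S.participates b a))

/-- Condition (2): in every subsequence `[E, R, E']`, `E ≠ E'`. -/
def NoERE (S : Schema) (P : List S.Class) : Prop :=
  ∀ i a b c, P[i]? = some a → P[i+1]? = some b → P[i+2]? = some c →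
    S.kind a = .entity → a ≠ c

/-- Condition (3): in every subsequence `[R, E, R']` with `R = R'`,
`card (R, E) = many`. -/
def CardMany (S : Schema) (P : List S.Class) : Prop :=
  ∀ i a b c, P[i]? = some a → P[i+1]? = some b → P[i+2]? = some c →
    S.kind a = .relationship → a = c → S.card a b = .many

/-- A valid relational path. -/
def ValidPath (S : Schema) (P : List S.Class) : Prop :=
  P ≠ [] ∧ S.Alternates P ∧ S.NoERE P ∧ S.CardMany P

end Schema

/-- A relational skeleton instantiating a schema: items with classes and a
symmetric adjacency relation, respecting participation and cardinality
constraints (`card = one` forces at most one adjacent relationship instance;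
relationship instances have exactly one adjacent entity instance per
participating entity class). -/
structure Skeleton (S : Schema) where
  Item : Type
  classOf : Item → S.Class
  adj : Item → Item → Prop
  adj_symm : ∀ {i j}, adj i j → adj j i
  adj_alt : ∀ {i j}, adj i j →
    (S.kind (classOf i) = .entity ∧ S.kind (classOf j) = .relationship ∧
      S.participates (classOf i) (classOf j)) ∨
    (S.kind (classOf i) = .relationship ∧ S.kind (classOf j) = .entity ∧
      S.participates (classOf j) (classOf i))
  card_one : ∀ {e r r'}, S.kind (classOf e) = .entity →
    S.card (classOf r) (classOf e) = .one → classOf r = classOf r' →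
    adj e r → adj e r' → r = r'
  rel_unique : ∀ {r i j}, S.kind (classOf r) = .relationship →
    adj r i → adj r j → classOf i = classOf j → i = j
  rel_total : ∀ {r E}, S.kind (classOf r) = .relationship →
    S.participates E (classOf r) → ∃ e, classOf e = E ∧ adj r e

namespace Skeleton

variable {S : Schema} (σ : Skeleton S)

/-- Auxiliary recursion for terminal sets under bridge burning semantics:
`(tsetAux P b ℓ).1` is the terminal set `P^{1:ℓ+1}|_b` (0-indexed `ℓ`) and
`(tsetAux P b ℓ).2` is the set of all items visited up to step `ℓ`. -/
def tsetAux (P : List S.Class) (b : σ.Item) : ℕ → Set σ.Item × Set σ.Item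
  | 0 => ({b}, {b})
  | ℓ+1 =>
      let prev := tsetAux P b ℓ
      let cur : Set σ.Item :=
        {i | P[ℓ+1]? = some (σ.classOf i) ∧ (∃ j ∈ prev.1, σ.adj i j) ∧
             i ∉ prev.2}
      (cur, prev.2 ∪ cur)

/-- The terminal set `P^{1:ℓ+1}|_b` (so `ℓ` is 0-indexed: `tset P b 0 = {b}`). -/
def tset (P : List S.Class) (b : σ.Item) (ℓ : ℕ) : Set σ.Item :=
  (σ.tsetAux P b ℓ).1

/-- The (full) terminal set `P|_b`. -/
def tfull (P : List S.Class) (b : σ.Item) : Set σ.Item :=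
  σ.tset P b (P.length - 1)

end Skeleton

/-- Item classes of the non-completeness counterexample schema. -/
inductive C13 | E1 | E2 | E3 | E4 | E5 | R1 | R2 | R3
deriving DecidableEq

open C13 in
/-- The non-completeness counterexample schema: `R1=⟨E1,E2,E4⟩`,
`R2=⟨E2,E3⟩`, `R3=⟨E3,E4,E5⟩`, with all cardinalities `one`. -/
def S13 : Schema where
  Class := C13
  kind := fun c => match c with
    | R1 | R2 | R3 => .relationship
    | _ => .entity
  participates := fun e r =>
    (e, r) ∈ ([(E1,R1),(E2,R1),(E4,R1),(E2,R2),(E3,R2),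
               (E3,R3),(E4,R3),(E5,R3)] : List (C13 × C13))
  card := fun _ _ => .one

open C13 in
def P13 : List C13 := [E1,R1,E2,R2,E3]
open C13 in
def Q13 : List C13 := [E1,R1,E4,R3,E3,R2,E2]
open C13 in
def S14 : List C13 := [E1,R1,E4,R3,E5]
open C13 in
def Sp13 : List C13 := [E1,R1,E2,R2,E3,R3,E5]
open C13 in
def D1 : List C13 := [E2,R2,E3,R3,E4,R1,E2,R2,E3]
open C13 in
def D2 : List C13 := [E2,R2,E3,R3,E5]

/-! In the skeleton with exactly one item per class, adjacent when the classes participate in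
each other, a path that visits every class at most once is never cut short by bridge burning
and never picks up a second item: its terminal set is the singleton of its last class.
Hence `Q|_{E1} = {E2}`, while `D₂|_{E2}`, `S|_{E1}` and `S′|_{E1}` all equal `{E5}`. -/

theorem List.Nodup.getElem?_notMem_take {α : Type*} {l : List α} (hl : l.Nodup) {n : ℕ}
    {a : α} (ha : l[n]? = some a) : a ∉ l.take n := by
  obtain ⟨hn, rfl⟩ := List.getElem?_eq_some_iff.mp ha
  intro hmem
  obtain ⟨j, hj, hjn⟩ := List.mem_take_iff_getElem.mp hmem
  have := hl.getElem_inj_iff.mp hjn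
  omega

namespace Skeleton

-- An `abbrev`, so that `Item` unfolds to `S.Class` for `simp` and instance search.
abbrev canonical (S : Schema)
    (hS : ∀ {e r}, S.participates e r → S.kind e = .entity ∧ S.kind r = .relationship) :
    Skeleton S where
  Item := S.Class
  classOf := id
  adj i j := S.participates i j ∨ S.participates j i
  adj_symm := Or.symm
  adj_alt := by
    rintro i j (h | h)
    · exact .inl ⟨(hS h).1, (hS h).2, h⟩
    · exact .inr ⟨(hS h).2, (hS h).1, h⟩
  card_one _ _ h _ _ := h
  rel_unique _ _ _ h := h
  rel_total {_ E} _ h := ⟨E, rfl, .inr h⟩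

variable {S : Schema}
  {hS : ∀ {e r}, S.participates e r → S.kind e = .entity ∧ S.kind r = .relationship}
  {P : List S.Class} {b : S.Class}

theorem tsetAux_canonical_of_nodup (hb : P.head? = some b) (hP : P.Nodup)
    (hchain : P.IsChain fun i j => S.participates i j ∨ S.participates j i) (ℓ : ℕ) :
    (canonical S hS).tsetAux P b ℓ = ({x | P[ℓ]? = some x}, {x | x ∈ P.take (ℓ + 1)}) := by
  rw [List.head?_eq_getElem?] at hb
  induction ℓ with
  | zero =>
    ext x <;> simp [tsetAux, List.take_one, List.head?_eq_getElem?, hb, eq_comm]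
  | succ ℓ ih =>
    simp only [tsetAux, ih, List.take_add_one (i := ℓ + 1)]
    have hcur : ∀ i, (P[ℓ + 1]? = some i ∧ (∃ j, P[ℓ]? = some j ∧ (canonical S hS).adj i j) ∧
        i ∉ P.take (ℓ + 1)) ↔ P[ℓ + 1]? = some i := by
      refine fun i => ⟨fun h => h.1, fun h => ⟨h, ?_, hP.getElem?_notMem_take h⟩⟩
      obtain ⟨hlt, rfl⟩ := List.getElem?_eq_some_iff.mp h
      exact ⟨P[ℓ], List.getElem?_eq_getElem _, (hchain.getElem ℓ hlt).symm⟩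
    have hvis : ∀ i, i ∈ P.take (ℓ + 1) ∨ P[ℓ + 1]? = some i ↔
        i ∈ P.take (ℓ + 1) ++ P[ℓ + 1]?.toList := by
      simp [eq_comm]
    ext i
    · exact hcur i
    · exact (or_congr_right (hcur i)).trans (hvis i)

theorem tfull_canonical_of_nodup {e : S.Class} (hb : P.head? = some b) (he : P.getLast? = some e)
    (hP : P.Nodup) (hchain : P.IsChain fun i j => S.participates i j ∨ S.participates j i) :
    (canonical S hS).tfull P b = {e} := by
  unfold tfull tset
  rw [tsetAux_canonical_of_nodup hb hP hchain, ← List.getLast?_eq_getElem?, he]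
  ext x
  exact Option.some_inj.trans eq_comm

end Skeleton

theorem S13_participates_bipartite {e r : S13.Class} (h : S13.participates e r) :
    S13.kind e = .entity ∧ S13.kind r = .relationship := by
  revert h; cases e <;> cases r <;> simp [S13]

/-- in the non-completeness counterexample, the tuple
`⟨Q, D_2, S, S′⟩` is co-intersectable: some skeleton, base `b` of class `E1`,
and `i_y ∈ Q|_b` satisfy `D_2|_{i_y} ∩ S|_b ∩ S′|_b ≠ ∅`. -/
theorem co_intersectable_Q_D2_S_Sp :
    ∃ (σ : Skeleton S13) (b : σ.Item), σ.classOf b = C13.E1 ∧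
      ∃ iy ∈ σ.tfull Q13 b,
        (σ.tfull D2 iy ∩ σ.tfull S14 b ∩ σ.tfull Sp13 b).Nonempty := by
  let σ := Skeleton.canonical S13 S13_participates_bipartite
  have hQ : σ.tfull Q13 C13.E1 = {C13.E2} :=
    Skeleton.tfull_canonical_of_nodup rfl rfl (by decide : Q13.Nodup) (by simp [Q13, S13])
  have hD : σ.tfull D2 C13.E2 = {C13.E5} :=
    Skeleton.tfull_canonical_of_nodup rfl rfl (by decide : D2.Nodup) (by simp [D2, S13])
  have hS : σ.tfull S14 C13.E1 = {C13.E5} :=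
    Skeleton.tfull_canonical_of_nodup rfl rfl (by decide : S14.Nodup) (by simp [S14, S13])
  have hSp : σ.tfull Sp13 C13.E1 = {C13.E5} :=
    Skeleton.tfull_canonical_of_nodup rfl rfl (by decide : Sp13.Nodup) (by simp [Sp13, S13])
  refine ⟨σ, C13.E1, rfl, C13.E2, hQ ▸ rfl, C13.E5, ?_⟩
  rw [hD, hS, hSp]
  exact ⟨⟨rfl, rfl⟩, rfl⟩
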